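/- Let G be a finite simple isolate-free graph with maximum degree Δ(G) = 3, let Ψ be a total coalition partition of G with 6 classes (the maximum possible, since TC(G) ≤ 6 when Δ(G) = 3), and suppose that V₁, V₂, V₃, V₄, V₅, V₆ are the six classes of Ψ forming a 6-cycle in the total coalition graph TCG(G,Ψ) (i.e., V₁V₂, V₂V₃, V₃V₄, V₄V₅, V₅V₆, V₆V₁ are all total coalitions). Then TCG(G,Ψ) is isomorphic to the complete bipartite graph K₃,₃. -/

import Mathlib

open scoped Classical

variable {V : Type*}

/-- `S` is a total dominating set of `G`: every vertex of `G` has a neighbor in `S`. -/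
def TotalDomSet (G : SimpleGraph V) (S : Finset V) : Prop :=
  ∀ v : V, ∃ u ∈ S, G.Adj v u

/-- Two disjoint sets `A`, `B` form a total coalition in `G` if neither is a total
dominating set but their union is. -/
def TotalCoalition [DecidableEq V] (G : SimpleGraph V) (A B : Finset V) : Prop :=
  Disjoint A B ∧ ¬ TotalDomSet G A ∧ ¬ TotalDomSet G B ∧ TotalDomSet G (A ∪ B)

/-- A graph is isolate-free if every vertex has a neighbor. -/
def IsolateFree (G : SimpleGraph V) : Prop :=
  ∀ v : V, ∃ u : V, G.Adj v u

/-- `Ψ` is a total coalition partition of `G`: a partition of the vertex set into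
nonempty classes, none of which is a total dominating set, such that every class
forms a total coalition with at least one other class. -/
def IsTCPartition [DecidableEq V] (G : SimpleGraph V) (Ψ : Finset (Finset V)) : Prop :=
  (∀ C ∈ Ψ, C.Nonempty) ∧
  (∀ v : V, ∃! C, C ∈ Ψ ∧ v ∈ C) ∧
  (∀ C ∈ Ψ, ¬ TotalDomSet G C) ∧
  (∀ C ∈ Ψ, ∃ D ∈ Ψ, D ≠ C ∧ TotalCoalition G C D)

/-- The total coalition graph `TCG(G,Ψ)`: vertices are the classes of `Ψ`, and two
classes are adjacent iff they form a total coalition. -/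
def TCG [DecidableEq V] (G : SimpleGraph V) (Ψ : Finset (Finset V)) :
    SimpleGraph {C // C ∈ Ψ} where
  Adj C D := C ≠ D ∧ TotalCoalition G (C : Finset V) (D : Finset V)
  symm := by
    refine ⟨?_⟩
    rintro C D ⟨hne, hd, hA, hB, hU⟩
    exact ⟨hne.symm, hd.symm, hB, hA, by rwa [Finset.union_comm]⟩
  loopless := by refine ⟨?_⟩; rintro C ⟨hne, _⟩; exact hne rfl

/-
Every vertex `v` is totally dominated by the union of any two consecutive classes of the
6-cycle, so the indices of the classes containing a neighbour of `v` form a vertex cover of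
`C₆`. The classes are disjoint and `deg v ≤ 3`, so this cover has at most three elements, and
the only such covers are the even and the odd positions. A vertex not dominated by `V₁`
therefore has no neighbour in `V₁ ∪ V₃ ∪ V₅`, so no two odd classes form a coalition; likewise
for even classes; and an odd and an even class always dominate together. Hence the coalition
graph is the complete bipartite graph between odd and even classes.
-/

open Function

namespace IsTCPartition

variable [DecidableEq V] {G : SimpleGraph V} {Ψ : Finset (Finset V)}

theorem disjoint (hΨ : IsTCPartition G Ψ) {C D : Finset V} (hC : C ∈ Ψ) (hD : D ∈ Ψ)
    (hCD : C ≠ D) : Disjoint C D := by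
  rw [Finset.disjoint_left]
  intro v hvC hvD
  obtain ⟨E, -, hE⟩ := hΨ.2.1 v
  exact hCD ((hE C ⟨hC, hvC⟩).trans (hE D ⟨hD, hvD⟩).symm)

end IsTCPartition

theorem SimpleGraph.card_le_degree_of_pairwise_disjoint [Fintype V] (G : SimpleGraph V)
    [DecidableRel G.Adj] (v : V) {ι : Type*} {W : ι → Finset V} (hW : Pairwise (Disjoint on W))
    {s : Finset ι} (hs : ∀ i ∈ s, ∃ u ∈ W i, G.Adj v u) : s.card ≤ G.degree v := by
  have : Nonempty V := ⟨v⟩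
  choose! f hfW hfadj using hs
  rw [← G.card_neighborFinset_eq_degree]
  refine Finset.card_le_card_of_injOn f (fun i hi => (G.mem_neighborFinset v _).2 (hfadj i hi)) ?_
  intro i hi j hj hij
  by_contra hne
  exact Finset.disjoint_left.1 (hW hne) (hfW i hi) (hij ▸ hfW j hj)

/-- The vertex covers of `C₆` with at most three vertices are the even and the odd positions. -/
theorem Fin.mem_iff_mem_iff_mod_two_eq_of_cycle_cover : ∀ S : Finset (Fin 6),
    (∀ i, i ∈ S ∨ i + 1 ∈ S) → S.card ≤ 3 →
      ∀ i j : Fin 6, ((i ∈ S ↔ j ∈ S) ↔ (i : ℕ) % 2 = j % 2) := by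
  decide

theorem nonempty_iso_completeBipartiteGraph_of_adj_iff_mod_two_ne {α : Type*}
    (H : SimpleGraph α) (e : Fin 6 ≃ α) (hH : ∀ i j, H.Adj (e i) (e j) ↔ (i : ℕ) % 2 ≠ j % 2) :
    Nonempty (H ≃g completeBipartiteGraph (Fin 3) (Fin 3)) := by
  let σ : Fin 3 ⊕ Fin 3 → Fin 6 :=
    Sum.elim (fun k => ⟨2 * k, by omega⟩) (fun k => ⟨2 * k + 1, by omega⟩)
  have hσ : Bijective σ := by decide
  have hadj : ∀ x y, (σ x : ℕ) % 2 ≠ (σ y : ℕ) % 2 ↔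
      (completeBipartiteGraph (Fin 3) (Fin 3)).Adj x y := by
    rintro (x | x) (y | y) <;> simp [σ]
  exact ⟨SimpleGraph.Iso.symm
    ⟨(Equiv.ofBijective σ hσ).trans e, fun {x y} => (hH _ _).trans (hadj x y)⟩⟩

section SixCycle

variable [Fintype V] [DecidableEq V] {G : SimpleGraph V} [DecidableRel G.Adj]
  {W : Fin 6 → Finset V}

theorem exists_adj_iff_exists_adj_iff_mod_two_eq (hΔ : G.maxDegree ≤ 3)
    (hW : Pairwise (Disjoint on W)) (hcycle : ∀ i, TotalDomSet G (W i ∪ W (i + 1)))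
    (v : V) (i j : Fin 6) :
    ((∃ u ∈ W i, G.Adj v u) ↔ (∃ u ∈ W j, G.Adj v u)) ↔ (i : ℕ) % 2 = j % 2 := by
  set S := Finset.univ.filter fun k => ∃ u ∈ W k, G.Adj v u
  have hcover : ∀ k, k ∈ S ∨ k + 1 ∈ S := by
    intro k
    obtain ⟨u, hu, hvu⟩ := hcycle k v
    rcases Finset.mem_union.1 hu with hu | hu
    · exact Or.inl (by simpa [S] using ⟨u, hu, hvu⟩)
    · exact Or.inr (by simpa [S] using ⟨u, hu, hvu⟩)
  have hcard : S.card ≤ 3 :=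
    ((G.card_le_degree_of_pairwise_disjoint v hW (by simp [S])).trans
      (G.degree_le_maxDegree v)).trans hΔ
  simpa [S] using Fin.mem_iff_mem_iff_mod_two_eq_of_cycle_cover S hcover hcard i j

theorem totalCoalition_iff_mod_two_ne {Ψ : Finset (Finset V)} (hΨ : IsTCPartition G Ψ)
    (hΔ : G.maxDegree ≤ 3) (hWΨ : ∀ i, W i ∈ Ψ) (hWinj : Injective W)
    (hcycle : ∀ i, TotalCoalition G (W i) (W (i + 1))) (i j : Fin 6) :
    TotalCoalition G (W i) (W j) ↔ (i : ℕ) % 2 ≠ j % 2 := by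
  have hW : Pairwise (Disjoint on W) := fun k l hkl =>
    hΨ.disjoint (hWΨ k) (hWΨ l) (hWinj.ne hkl)
  have hpar := exists_adj_iff_exists_adj_iff_mod_two_eq hΔ hW (fun k => (hcycle k).2.2.2)
  constructor
  · rintro ⟨-, hi, -, hij⟩ hsame
    obtain ⟨v, hv⟩ : ∃ v, ¬∃ u ∈ W i, G.Adj v u := by simpa [TotalDomSet] using hi
    have hv' : ¬∃ u ∈ W j, G.Adj v u := fun h => hv (((hpar v i j).2 hsame).2 h)
    obtain ⟨u, hu, hvu⟩ := hij v
    rcases Finset.mem_union.1 hu with hu | hu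
    exacts [hv ⟨u, hu, hvu⟩, hv' ⟨u, hu, hvu⟩]
  · intro hne
    have hij : i ≠ j := fun h => hne (h ▸ rfl)
    refine ⟨hW hij, hΨ.2.2.1 _ (hWΨ i), hΨ.2.2.1 _ (hWΨ j), fun v => ?_⟩
    have hor : (∃ u ∈ W i, G.Adj v u) ∨ (∃ u ∈ W j, G.Adj v u) := by
      by_contra hnone
      exact mt (hpar v i j).1 hne
        (iff_of_false (fun h => hnone (.inl h)) (fun h => hnone (.inr h)))
    rcases hor with ⟨u, hu, hvu⟩ | ⟨u, hu, hvu⟩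
    exacts [⟨u, Finset.mem_union_left _ hu, hvu⟩, ⟨u, Finset.mem_union_right _ hu, hvu⟩]

end SixCycle

theorem statement_19_general [Fintype V] [DecidableEq V]
    (G : SimpleGraph V) [DecidableRel G.Adj]
    (hΔ : G.maxDegree = 3)
    (Ψ : Finset (Finset V)) (hΨ : IsTCPartition G Ψ) (hcard : Ψ.card = 6)
    (V₁ V₂ V₃ V₄ V₅ V₆ : Finset V)
    (h1 : V₁ ∈ Ψ) (h2 : V₂ ∈ Ψ) (h3 : V₃ ∈ Ψ) (h4 : V₄ ∈ Ψ) (h5 : V₅ ∈ Ψ) (h6 : V₆ ∈ Ψ)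
    (hdist : [V₁, V₂, V₃, V₄, V₅, V₆].Pairwise (· ≠ ·))
    (h12 : TotalCoalition G V₁ V₂) (h23 : TotalCoalition G V₂ V₃)
    (h34 : TotalCoalition G V₃ V₄) (h45 : TotalCoalition G V₄ V₅)
    (h56 : TotalCoalition G V₅ V₆) (h61 : TotalCoalition G V₆ V₁) :
    Nonempty (TCG G Ψ ≃g completeBipartiteGraph (Fin 3) (Fin 3)) := by
  let W : Fin 6 → Finset V := ![V₁, V₂, V₃, V₄, V₅, V₆]
  have hWinj : Injective W := List.nodup_ofFn.1 hdist
  have hWΨ : ∀ i, W i ∈ Ψ := by intro i; fin_cases i <;> assumption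
  have hcycle : ∀ i, TotalCoalition G (W i) (W (i + 1)) := by
    intro i; fin_cases i <;> assumption
  let e : Fin 6 ≃ {C // C ∈ Ψ} := Equiv.ofBijective (fun i => ⟨W i, hWΨ i⟩)
    ((Fintype.bijective_iff_injective_and_card _).2
      ⟨fun i j h => hWinj (congrArg Subtype.val h), by simp [hcard]⟩)
  refine nonempty_iso_completeBipartiteGraph_of_adj_iff_mod_two_ne _ e fun i j => ?_
  have hcoal := totalCoalition_iff_mod_two_ne hΨ hΔ.le hWΨ hWinj hcycle i j
  have hne : (i : ℕ) % 2 ≠ j % 2 → e i ≠ e j := fun h => e.injective.ne fun hij => h (hij ▸ rfl)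
  exact ⟨fun h => hcoal.1 h.2, fun h => ⟨hne h, hcoal.2 h⟩⟩

/-- If `Δ(G) = 3` and a total coalition partition `Ψ` with `6` classes contains six
pairwise distinct classes forming a `6`-cycle in the total coalition graph, then
`TCG(G,Ψ)` is isomorphic to the complete bipartite graph `K₃,₃`. -/
theorem statement_19 [Fintype V] [DecidableEq V]
    (G : SimpleGraph V) [DecidableRel G.Adj] (hG : IsolateFree G)
    (hΔ : G.maxDegree = 3)
    (Ψ : Finset (Finset V)) (hΨ : IsTCPartition G Ψ) (hcard : Ψ.card = 6)
    (V₁ V₂ V₃ V₄ V₅ V₆ : Finset V)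
    (h1 : V₁ ∈ Ψ) (h2 : V₂ ∈ Ψ) (h3 : V₃ ∈ Ψ) (h4 : V₄ ∈ Ψ) (h5 : V₅ ∈ Ψ) (h6 : V₆ ∈ Ψ)
    (hdist : [V₁, V₂, V₃, V₄, V₅, V₆].Pairwise (· ≠ ·))
    (h12 : TotalCoalition G V₁ V₂) (h23 : TotalCoalition G V₂ V₃)
    (h34 : TotalCoalition G V₃ V₄) (h45 : TotalCoalition G V₄ V₅)
    (h56 : TotalCoalition G V₅ V₆) (h61 : TotalCoalition G V₆ V₁) :
    Nonempty (TCG G Ψ ≃g completeBipartiteGraph (Fin 3) (Fin 3)) :=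
  statement_19_general G hΔ Ψ hΨ hcard V₁ V₂ V₃ V₄ V₅ V₆ h1 h2 h3 h4 h5 h6 hdist h12 h23 h34 h45 h56
    h61
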